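/- arXiv:2309.12670 — 3 statements merged into one kernel-verified Lean document; each statement's English description precedes it below -/
import Mathlib

section
/- If G is a finite d-regular simple graph, then there exists a finite (d+1)-regular simple graph G' such that wd(G') ≤ wd(G) + 1. -/
open scoped Classical

namespace WeakDegeneracy

variable {V : Type} [Fintype V]

/-- `WRem G S f` means all vertices of `S` can be removed from `G` (restricted to `S`)
by a sequence of legal `Delete` and `DeleteSave` operations, starting from the
value function `f`.  Legality of a step requires the resulting function to be
nonnegative on the remaining vertices. -/
inductive WRem (G : SimpleGraph V) : Finset V → (V → ℤ) → Prop
  | empty (f : V → ℤ) : WRem G ∅ f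
  | del {S : Finset V} {f : V → ℤ} (u : V) (hu : u ∈ S)
      (hleg : ∀ v ∈ S.erase u, 0 ≤ (if G.Adj u v then f v - 1 else f v))
      (h : WRem G (S.erase u) (fun v => if G.Adj u v then f v - 1 else f v)) :
      WRem G S f
  | delSave {S : Finset V} {f : V → ℤ} (u w : V) (hu : u ∈ S) (hw : w ∈ S)
      (hadj : G.Adj u w) (hgt : f w < f u)
      (hleg : ∀ v ∈ S.erase u, 0 ≤ (if G.Adj u v ∧ v ≠ w then f v - 1 else f v))
      (h : WRem G (S.erase u) (fun v => if G.Adj u v ∧ v ≠ w then f v - 1 else f v)) :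
      WRem G S f

/-- `G` is weakly `f`-degenerate: all vertices can be removed by legal operations. -/
def WeaklyFDegenerate (G : SimpleGraph V) (f : V → ℤ) : Prop :=
  WRem G Finset.univ f

/-- `G` is weakly `d`-degenerate: weakly `f`-degenerate for the constant function `d`. -/
def WeaklyDegenerate (G : SimpleGraph V) (d : ℕ) : Prop :=
  WeaklyFDegenerate G (fun _ => (d : ℤ))

/-- The weak degeneracy of `G`: the least `d` such that `G` is weakly `d`-degenerate. -/
noncomputable def weakDeg (G : SimpleGraph V) : ℕ :=
  sInf {d : ℕ | WeaklyDegenerate G d}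

/-!
Take `G' = G □ K₂`: two copies of `G` joined by a perfect matching. Starting from the constant
budget `wd(G) + 1`, delete the first copy along a removal sequence witnessing that `G` is weakly
`wd(G)`-degenerate (the spare unit of budget changes no comparison in a `DeleteSave` step). Every
vertex of the second copy loses exactly one unit, through its matched partner, so the second copy
is left with the constant budget `wd(G)` and can be removed along the same sequence.
-/

open Finset SimpleGraph

section

variable {α β : Type} {G : SimpleGraph α} {H : SimpleGraph β}

theorem isRegularOfDegree_boxProd [G.LocallyFinite] [H.LocallyFinite] [(G □ H).LocallyFinite]
    {d e : ℕ} (hG : G.IsRegularOfDegree d) (hH : H.IsRegularOfDegree e) :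
    (G □ H).IsRegularOfDegree (d + e) := fun x => by
  rw [degree_boxProd, hG x.1, hH x.2]

theorem card_filter_eq_card_filter_erase_add {S : Finset α} {u : α} (hu : u ∈ S) (p : α → Prop) :
    #{v ∈ S | p v} = #{v ∈ S.erase u | p v} + if p u then 1 else 0 := by
  rw [filter_erase]
  split_ifs with hpu
  · rw [card_erase_add_one (mem_filter.2 ⟨hu, hpu⟩)]
  · rw [erase_eq_of_notMem (by simp [hpu]), add_zero]

theorem erase_map_union [DecidableEq β] (ψ : α ↪ β) {B : Finset β} (hψB : ∀ v, ψ v ∉ B)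
    (S : Finset α) (u : α) :
    (S.map ψ ∪ B).erase (ψ u) = (S.erase u).map ψ ∪ B := by
  rw [erase_union_distrib, map_erase, erase_eq_of_notMem (hψB u)]

theorem WRem.congr {S : Finset α} {f f' : α → ℤ} (h : WRem G S f) (hff' : ∀ v ∈ S, f v = f' v) :
    WRem G S f' := by
  induction h generalizing f' with
  | empty => exact .empty f'
  | @del S f u hu hleg _ ih =>
    have hagree : ∀ v ∈ S.erase u, (if G.Adj u v then f v - 1 else f v) =
        if G.Adj u v then f' v - 1 else f' v := fun v hv => by
      rw [hff' v (mem_of_mem_erase hv)]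
    exact .del u hu (fun v hv => hagree v hv ▸ hleg v hv) (ih hagree)
  | @delSave S f u w hu hw hadj hgt hleg _ ih =>
    have hagree : ∀ v ∈ S.erase u, (if G.Adj u v ∧ v ≠ w then f v - 1 else f v) =
        if G.Adj u v ∧ v ≠ w then f' v - 1 else f' v := fun v hv => by
      rw [hff' v (mem_of_mem_erase hv)]
    refine .delSave u w hu hw hadj ?_ (fun v hv => hagree v hv ▸ hleg v hv) (ih hagree)
    rwa [← hff' u hu, ← hff' w hw]

theorem WRem.add_const {S : Finset α} {f : α → ℤ} (h : WRem G S f) {c : ℤ} (hc : 0 ≤ c) :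
    WRem G S (fun v => f v + c) := by
  induction h with
  | empty => exact .empty _
  | @del S f u hu hleg _ ih =>
    refine .del u hu (fun v hv => ?_) (ih.congr fun v _ => ?_)
    · have := hleg v hv
      split_ifs at this ⊢ <;> linarith
    · dsimp only
      split_ifs <;> ring
  | @delSave S f u w hu hw hadj hgt hleg _ ih =>
    refine .delSave u w hu hw hadj (by linarith) (fun v hv => ?_) (ih.congr fun v _ => ?_)
    · have := hleg v hv
      split_ifs at this ⊢ <;> linarith
    · dsimp only
      split_ifs <;> ring

theorem WRem.of_card_filter_adj_le {S : Finset α} {f : α → ℤ}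
    (h : ∀ v ∈ S, (#{w ∈ S | G.Adj v w} : ℤ) ≤ f v) : WRem G S f := by
  induction S using Finset.induction_on generalizing f with
  | empty => exact .empty f
  | insert a s ha ih =>
    have hf : ∀ v ∈ s, (#{w ∈ s | G.Adj v w} : ℤ) ≤ if G.Adj a v then f v - 1 else f v := by
      intro v hv
      have hv' := h v (mem_insert_of_mem hv)
      rw [card_filter_eq_card_filter_erase_add (mem_insert_self a s), erase_insert ha,
        G.adj_comm v a] at hv'
      split_ifs at hv' ⊢ <;> push_cast at hv' <;> linarith
    refine .del a (mem_insert_self a s) ?_ ?_ <;> rw [erase_insert ha]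
    · exact fun v hv => (Nat.cast_nonneg _).trans (hf v hv)
    · exact ih hf

variable (φ : G ↪g H) {B : Finset β} {g : β → ℤ}


private theorem WRem.map_union_step (hg : ∀ b ∈ B, 0 ≤ g b) (hφB : ∀ v, φ v ∉ B)
    {S : Finset α} {u : α} (hu : u ∈ S) {f : α → ℤ} {F : β → ℤ}
    {P : α → Prop} [DecidablePred P] {Q : β → Prop} [DecidablePred Q]
    (hQ : ∀ v, Q (φ v) ↔ P v) (hQB : ∀ b ∈ B, Q b ↔ H.Adj (φ u) b)
    (hF : ∀ v ∈ S, F (φ v) = f v) (hFB : ∀ b ∈ B, F b = g b + #{v ∈ S | H.Adj (φ v) b})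
    (hleg : ∀ v ∈ S.erase u, 0 ≤ if P v then f v - 1 else f v)
    (ih : ∀ F' : β → ℤ, (∀ v ∈ S.erase u, F' (φ v) = if P v then f v - 1 else f v) →
      (∀ b ∈ B, F' b = g b + #{v ∈ S.erase u | H.Adj (φ v) b}) →
      WRem H ((S.erase u).map φ.toEmbedding ∪ B) F') :
    (∀ x ∈ (S.map φ.toEmbedding ∪ B).erase (φ u), 0 ≤ if Q x then F x - 1 else F x) ∧
      WRem H ((S.map φ.toEmbedding ∪ B).erase (φ u)) fun x => if Q x then F x - 1 else F x := by
  have hval : ∀ v ∈ S.erase u,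
      (if Q (φ v) then F (φ v) - 1 else F (φ v)) = if P v then f v - 1 else f v := by
    intro v hv
    simp only [hQ, hF v (mem_of_mem_erase hv)]
  have hvalB : ∀ b ∈ B,
      (if Q b then F b - 1 else F b) = g b + #{v ∈ S.erase u | H.Adj (φ v) b} := by
    intro b hb
    simp only [hFB b hb, card_filter_eq_card_filter_erase_add hu, hQB b hb]
    split_ifs <;> push_cast <;> ring
  have hset := erase_map_union φ.toEmbedding hφB S u
  rw [RelEmbedding.coe_toEmbedding] at hset
  rw [hset]
  refine ⟨fun x hx => ?_, ih _ hval hvalB⟩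
  rcases mem_union.1 hx with hx | hx
  · obtain ⟨v, hv, rfl⟩ := mem_map.1 hx
    exact (hval v hv).symm ▸ hleg v hv
  · rw [hvalB x hx]
    have := hg x hx
    positivity

-- The copy of `S` is deleted first; each of its vertices costs its neighbours in `B` one unit.
theorem WRem.map_union (hB : WRem H B g) (hg : ∀ b ∈ B, 0 ≤ g b) (hφB : ∀ v, φ v ∉ B)
    {S : Finset α} {f : α → ℤ} (h : WRem G S f) (F : β → ℤ) (hF : ∀ v ∈ S, F (φ v) = f v)
    (hFB : ∀ b ∈ B, F b = g b + #{v ∈ S | H.Adj (φ v) b}) :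
    WRem H (S.map φ.toEmbedding ∪ B) F := by
  induction h generalizing F with
  | empty => simpa using hB.congr fun b hb => by simp [hFB b hb]
  | @del S f u hu hleg _ ih =>
    obtain ⟨hleg', hrem⟩ := WRem.map_union_step φ hg hφB hu (fun v => φ.map_adj_iff)
      (fun _ _ => Iff.rfl) hF hFB hleg ih
    exact .del (φ u) (mem_union_left _ (mem_map_of_mem _ hu)) hleg' hrem
  | @delSave S f u w hu hw hadj hgt hleg _ ih =>
    obtain ⟨hleg', hrem⟩ := WRem.map_union_step φ hg hφB hu
      (Q := fun x => H.Adj (φ u) x ∧ x ≠ φ w) (fun v => by simp [φ.injective.ne_iff])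
      (fun b hb => and_iff_left (ne_of_mem_of_not_mem hb (hφB w))) hF hFB hleg ih
    refine .delSave (φ u) (φ w) (mem_union_left _ (mem_map_of_mem _ hu))
      (mem_union_left _ (mem_map_of_mem _ hw)) (φ.map_adj_iff.2 hadj) ?_ hleg' hrem
    rwa [hF u hu, hF w hw]

theorem WRem.map {S : Finset α} {f : α → ℤ} (h : WRem G S f) (F : β → ℤ)
    (hF : ∀ v ∈ S, F (φ v) = f v) : WRem H (S.map φ.toEmbedding) F := by
  simpa using WRem.map_union φ (B := ∅) (.empty fun _ => 0) (by simp) (by simp) h F hF (by simp)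

end

theorem weaklyDegenerate_card (G : SimpleGraph V) : WeaklyDegenerate G (Fintype.card V) :=
  WRem.of_card_filter_adj_le fun _ _ => by exact_mod_cast card_filter_le _ _

theorem weaklyDegenerate_weakDeg (G : SimpleGraph V) : WeaklyDegenerate G (weakDeg G) :=
  Nat.sInf_mem (s := {d | WeaklyDegenerate G d}) ⟨_, weaklyDegenerate_card G⟩

theorem weaklyDegenerate_boxProd_top_bool {G : SimpleGraph V} {k : ℕ}
    (hk : WeaklyDegenerate G k) : WeaklyDegenerate (G □ (⊤ : SimpleGraph Bool)) (k + 1) := by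
  have hsecond : WRem (G □ ⊤) (univ.map (boxProdLeft G ⊤ true).toEmbedding) (fun _ => (k : ℤ)) :=
    hk.map _ _ fun _ _ => rfl
  have hfirst : WeaklyDegenerate G (k + 1) := by
    simpa [WeaklyDegenerate, WeaklyFDegenerate] using hk.add_const zero_le_one
  have hcount : ∀ b ∈ univ.map (boxProdLeft G ⊤ true).toEmbedding, ((k + 1 : ℕ) : ℤ) =
      k + #{v ∈ univ | (G □ ⊤).Adj (boxProdLeft G ⊤ false v) b} := by
    intro b hb
    obtain ⟨v, -, rfl⟩ := mem_map.1 hb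
    simp only [Nat.cast_add, Nat.cast_one, boxProdLeft_apply, RelEmbedding.coe_toEmbedding,
      boxProd_adj, Bool.false_eq_true, and_false, top_adj, ne_eq, not_false_eq_true, true_and,
      false_or, add_right_inj]
    rw [filter_eq' univ v]
    simp
  show WRem _ univ _
  convert WRem.map_union (boxProdLeft G ⊤ false) hsecond (by simp) (by simp) hfirst _
    (fun _ _ => rfl) hcount
  ext ⟨v, b⟩
  cases b <;> simp

theorem weakDeg_boxProd_top_bool_le (G : SimpleGraph V) :
    weakDeg (G □ (⊤ : SimpleGraph Bool)) ≤ weakDeg G + 1 :=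
  Nat.sInf_le (weaklyDegenerate_boxProd_top_bool (weaklyDegenerate_weakDeg G))

/-- If `G` is a finite `d`-regular simple graph, then there is a finite
`(d+1)`-regular simple graph `G'` with `wd(G') ≤ wd(G) + 1`. -/
theorem exists_succ_regular_weakDeg_le {V : Type} [Fintype V]
    (G : SimpleGraph V) (d : ℕ) (hreg : G.IsRegularOfDegree d) :
    ∃ (W : Type) (_ : Fintype W) (G' : SimpleGraph W),
      G'.IsRegularOfDegree (d + 1) ∧ weakDeg G' ≤ weakDeg G + 1 := by
  refine ⟨V × Bool, inferInstance, G □ ⊤, ?_, weakDeg_boxProd_top_bool_le G⟩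
  have hK₂ : (⊤ : SimpleGraph Bool).IsRegularOfDegree 1 := IsRegularOfDegree.top
  convert isRegularOfDegree_boxProd hreg hK₂

end WeakDegeneracy
end

section
/- Let G be a finite d-regular simple graph, and let G' be the graph with vertex set V(G) × {0, 1, ..., d+1}, where (u,i) and (v,i) are adjacent for each i ∈ {1,...,d+1} whenever uv ∈ E(G), and (v,i) and (v,0) are adjacent for each i ∈ {1,...,d+1} and each v ∈ V(G) (these are all edges of G'). Then G' is (d+1)-regular and wd(G') ≤ wd(G) + 1. -/
open scoped Classical

namespace WeakDegeneracy

variable {V : Type} [Fintype V]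

/-- The augmented graph `G'` on `V × {0, 1, …, d+1}`: for each `i ∈ {1, …, d+1}`,
`(u, i)` and `(v, i)` are adjacent whenever `uv ∈ E(G)` (so indices `1, …, d+1`
carry `d+1` copies of `G`), and `(v, i)` is adjacent to `(v, 0)` for each
`i ∈ {1, …, d+1}` and each `v` (a common new neighbor for the `d+1` copies of `v`).
These are all of the edges. -/
def augment {V : Type} (G : SimpleGraph V) (d : ℕ) : SimpleGraph (V × Fin (d + 2)) :=
  SimpleGraph.fromRel
    (fun p q => (p.2 = q.2 ∧ p.2 ≠ 0 ∧ G.Adj p.1 q.1) ∨ (p.1 = q.1 ∧ p.2 = 0 ∧ q.2 ≠ 0))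

lemma WRem_congr {G : SimpleGraph V} {S : Finset V} {f : V → ℤ}
    (h : WRem G S f) : ∀ {g : V → ℤ}, (∀ v ∈ S, f v = g v) → WRem G S g := by
  induction h with
  | empty f => intro g _; exact WRem.empty g
  | @del S f u hu hleg h ih =>
      intro g hfg
      have key : ∀ v ∈ S.erase u, (if G.Adj u v then f v - 1 else f v)
          = (if G.Adj u v then g v - 1 else g v) := by
        intro v hv
        rw [hfg v (Finset.mem_of_mem_erase hv)]
      refine WRem.del u hu (fun v hv => (key v hv) ▸ hleg v hv) (ih key)
  | @delSave S f u w hu hw hadj hgt hleg h ih =>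
      intro g hfg
      have key : ∀ v ∈ S.erase u, (if G.Adj u v ∧ v ≠ w then f v - 1 else f v)
          = (if G.Adj u v ∧ v ≠ w then g v - 1 else g v) := by
        intro v hv
        rw [hfg v (Finset.mem_of_mem_erase hv)]
      refine WRem.delSave u w hu hw hadj ?_ (fun v hv => (key v hv) ▸ hleg v hv) (ih key)
      rw [← hfg u hu, ← hfg w hw]; exact hgt

lemma WRem_greedy {G : SimpleGraph V} (S : Finset V) :
    ∀ (f : V → ℤ), (∀ v ∈ S, ((S.filter (G.Adj v)).card : ℤ) ≤ f v) → WRem G S f := by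
  induction S using Finset.strongInduction with
  | _ S ih =>
    intro f hf
    rcases S.eq_empty_or_nonempty with rfl | ⟨u, hu⟩
    · exact WRem.empty f
    · have key : ∀ v ∈ S.erase u,
          (((S.erase u).filter (G.Adj v)).card : ℤ) ≤ (if G.Adj u v then f v - 1 else f v) := by
        intro v hv
        have hvS := Finset.mem_of_mem_erase hv
        rw [Finset.filter_erase]
        by_cases hadj : G.Adj u v
        · have humem : u ∈ S.filter (G.Adj v) := Finset.mem_filter.2 ⟨hu, hadj.symm⟩
          rw [if_pos hadj, Finset.card_erase_of_mem humem]
          have hc : 1 ≤ (S.filter (G.Adj v)).card := Finset.card_pos.2 ⟨u, humem⟩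
          push_cast [Nat.cast_sub hc]
          linarith [hf v hvS]
        · rw [if_neg hadj]
          calc (((S.filter (G.Adj v)).erase u).card : ℤ)
              ≤ ((S.filter (G.Adj v)).card : ℤ) := by
                exact_mod_cast Finset.card_le_card (Finset.erase_subset _ _)
            _ ≤ f v := hf v hvS
      refine WRem.del u hu (fun v hv => le_trans (by positivity) (key v hv)) ?_
      exact ih (S.erase u) (Finset.erase_ssubset hu) _ key

lemma WRem_map {W : Type} {G : SimpleGraph V} {H : SimpleGraph W}
    {φ : V → W} (hinj : Function.Injective φ)
    (hadj : ∀ u v, G.Adj u v ↔ H.Adj (φ u) (φ v))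
    {S : Finset V} {f : V → ℤ} (h : WRem G S f) :
    ∀ (g : W → ℤ), (∀ v ∈ S, g (φ v) = f v) → WRem H (S.image φ) g := by
  induction h with
  | empty f => intro g _; simp only [Finset.image_empty]; exact WRem.empty g
  | @del S f u hu hleg h ih =>
      intro g hg
      have hset : (S.image φ).erase (φ u) = (S.erase u).image φ :=
        (Finset.image_erase hinj S u).symm
      refine WRem.del (φ u) (Finset.mem_image_of_mem φ hu) ?_ ?_
      · intro x hx
        rw [hset] at hx
        obtain ⟨v, hv, rfl⟩ := Finset.mem_image.1 hx
        have hvS := Finset.mem_of_mem_erase hv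
        rw [← hadj u v, hg v hvS]
        exact hleg v hv
      · rw [hset]
        refine ih _ ?_
        intro v hv
        have hvS := Finset.mem_of_mem_erase hv
        simp only [← hadj u v, hg v hvS]
  | @delSave S f u w hu hw hadj' hgt hleg h ih =>
      intro g hg
      have hne : ∀ v ∈ S, (φ v ≠ φ w ↔ v ≠ w) := fun v _ => not_congr hinj.eq_iff
      have hset : (S.image φ).erase (φ u) = (S.erase u).image φ :=
        (Finset.image_erase hinj S u).symm
      refine WRem.delSave (φ u) (φ w) (Finset.mem_image_of_mem φ hu)
        (Finset.mem_image_of_mem φ hw) ((hadj u w).1 hadj') ?_ ?_ ?_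
      · rw [hg u hu, hg w hw]; exact hgt
      · intro x hx
        rw [hset] at hx
        obtain ⟨v, hv, rfl⟩ := Finset.mem_image.1 hx
        have hvS := Finset.mem_of_mem_erase hv
        simp only [← hadj u v, hg v hvS, hne v hvS]
        exact hleg v hv
      · rw [hset]
        refine ih _ ?_
        intro v hv
        have hvS := Finset.mem_of_mem_erase hv
        simp only [← hadj u v, hg v hvS, hne v hvS]

lemma WRem_union {G : SimpleGraph V} {A : Finset V} {f : V → ℤ} (hA : WRem G A f) :
    ∀ (B : Finset V), Disjoint A B → (∀ a ∈ A, ∀ b ∈ B, ¬ G.Adj a b) →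
      (∀ b ∈ B, 0 ≤ f b) → WRem G B f → WRem G (A ∪ B) f := by
  induction hA with
  | empty f => intro B _ _ _ hB; simpa using hB
  | @del S f u hu hleg h ih =>
      intro B hdisj hedge hpos hB
      have huB : u ∉ B := fun hx => Finset.disjoint_left.1 hdisj hu hx
      have hset : (S ∪ B).erase u = (S.erase u) ∪ B := by
        rw [Finset.erase_union_distrib, Finset.erase_eq_of_notMem huB]
      have hfix : ∀ b ∈ B, (if G.Adj u b then f b - 1 else f b) = f b := fun b hb =>
        if_neg (hedge u hu b hb)
      refine WRem.del u (Finset.mem_union_left B hu) ?_ ?_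
      · intro v hv
        rw [hset] at hv
        rcases Finset.mem_union.1 hv with hv' | hv'
        · exact hleg v hv'
        · rw [hfix v hv']; exact hpos v hv'
      · rw [hset]
        refine ih B (hdisj.mono_left (Finset.erase_subset u S))
          (fun a ha => hedge a (Finset.mem_of_mem_erase ha)) ?_ ?_
        · intro b hb; exact le_of_le_of_eq (hpos b hb) (hfix b hb).symm
        · exact WRem_congr hB (fun b hb => (hfix b hb).symm)
  | @delSave S f u w hu hw hadj hgt hleg h ih =>
      intro B hdisj hedge hpos hB
      have huB : u ∉ B := fun hx => Finset.disjoint_left.1 hdisj hu hx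
      have hset : (S ∪ B).erase u = (S.erase u) ∪ B := by
        rw [Finset.erase_union_distrib, Finset.erase_eq_of_notMem huB]
      have hfix : ∀ b ∈ B, (if G.Adj u b ∧ b ≠ w then f b - 1 else f b) = f b := fun b hb =>
        if_neg (fun hc => hedge u hu b hb hc.1)
      refine WRem.delSave u w (Finset.mem_union_left B hu) (Finset.mem_union_left B hw)
        hadj hgt ?_ ?_
      · intro v hv
        rw [hset] at hv
        rcases Finset.mem_union.1 hv with hv' | hv'
        · exact hleg v hv'
        · rw [hfix v hv']; exact hpos v hv'
      · rw [hset]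
        refine ih B (hdisj.mono_left (Finset.erase_subset u S))
          (fun a ha => hedge a (Finset.mem_of_mem_erase ha)) ?_ ?_
        · intro b hb; exact le_of_le_of_eq (hpos b hb) (hfix b hb).symm
        · exact WRem_congr hB (fun b hb => (hfix b hb).symm)

lemma augment_adj {V : Type} {G : SimpleGraph V} {d : ℕ} (p q : V × Fin (d + 2)) :
    (augment G d).Adj p q ↔
      (p.2 = q.2 ∧ p.2 ≠ 0 ∧ G.Adj p.1 q.1) ∨
      (p.1 = q.1 ∧ p.2 = 0 ∧ q.2 ≠ 0) ∨
      (p.1 = q.1 ∧ q.2 = 0 ∧ p.2 ≠ 0) := by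
  simp only [augment, SimpleGraph.fromRel_adj]
  constructor
  · rintro ⟨hne, (⟨h1, h2, h3⟩ | ⟨h1, h2, h3⟩) | (⟨h1, h2, h3⟩ | ⟨h1, h2, h3⟩)⟩
    · exact Or.inl ⟨h1, h2, h3⟩
    · exact Or.inr (Or.inl ⟨h1, h2, h3⟩)
    · exact Or.inl ⟨h1.symm, fun h0 => h2 (h1.trans h0), h3.symm⟩
    · exact Or.inr (Or.inr ⟨h1.symm, h2, h3⟩)
  · rintro (⟨h1, h2, h3⟩ | ⟨h1, h2, h3⟩ | ⟨h1, h2, h3⟩)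
    · exact ⟨fun he => G.ne_of_adj h3 (congrArg Prod.fst he), Or.inl (Or.inl ⟨h1, h2, h3⟩)⟩
    · exact ⟨fun he => h3 (congrArg Prod.snd he ▸ h2), Or.inl (Or.inr ⟨h1, h2, h3⟩)⟩
    · exact ⟨fun he => h3 ((congrArg Prod.snd he).trans h2), Or.inr (Or.inr ⟨h1.symm, h2, h3⟩)⟩

lemma augment_adj_zero {V : Type} {G : SimpleGraph V} {d : ℕ} (v : V) (q : V × Fin (d + 2)) :
    (augment G d).Adj (v, 0) q ↔ q.1 = v ∧ q.2 ≠ 0 := by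
  rw [augment_adj]
  constructor
  · rintro (⟨h1, h2, h3⟩ | ⟨h1, h2, h3⟩ | ⟨h1, h2, h3⟩)
    · exact absurd rfl h2
    · exact ⟨h1.symm, h3⟩
    · exact absurd rfl h3
  · rintro ⟨h1, h2⟩; exact Or.inr (Or.inl ⟨h1.symm, rfl, h2⟩)

lemma augment_adj_ne_zero {V : Type} {G : SimpleGraph V} {d : ℕ} (v : V) (i : Fin (d + 2))
    (hi : i ≠ 0) (q : V × Fin (d + 2)) :
    (augment G d).Adj (v, i) q ↔ (q.2 = i ∧ G.Adj v q.1) ∨ q = (v, 0) := by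
  rw [augment_adj]
  constructor
  · rintro (⟨h1, h2, h3⟩ | ⟨h1, h2, h3⟩ | ⟨h1, h2, h3⟩)
    · exact Or.inl ⟨h1.symm, h3⟩
    · exact absurd h2 hi
    · exact Or.inr (Prod.ext h1.symm h2)
  · rintro (⟨h1, h2⟩ | rfl)
    · exact Or.inl ⟨h1.symm, hi, h2⟩
    · exact Or.inr (Or.inr ⟨rfl, rfl, hi⟩)

lemma augment_regular {V : Type} [Fintype V] {G : SimpleGraph V} {d : ℕ}
    (hreg : G.IsRegularOfDegree d) :
    (augment G d).IsRegularOfDegree (d + 1) := by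
  rintro ⟨v, i⟩
  unfold SimpleGraph.degree
  by_cases hi : i = 0
  · subst hi
    have hset : (augment G d).neighborFinset (v, 0)
        = (Finset.univ.erase (0 : Fin (d + 2))).image (fun j => (v, j)) := by
      ext q
      simp only [SimpleGraph.mem_neighborFinset, augment_adj_zero, Finset.mem_image,
        Finset.mem_erase, Finset.mem_univ, and_true]
      constructor
      · rintro ⟨h1, h2⟩; exact ⟨q.2, h2, Prod.ext h1.symm rfl⟩
      · rintro ⟨j, hj, rfl⟩; exact ⟨rfl, hj⟩
    rw [hset, Finset.card_image_of_injective _ (fun a b h => (Prod.ext_iff.1 h).2),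
      Finset.card_erase_of_mem (Finset.mem_univ _), Finset.card_univ, Fintype.card_fin]
    omega
  · have hset : (augment G d).neighborFinset (v, i)
        = insert ((v, 0) : V × Fin (d + 2)) ((G.neighborFinset v).image (fun u => (u, i))) := by
      ext q
      simp only [SimpleGraph.mem_neighborFinset, augment_adj_ne_zero v i hi, Finset.mem_insert,
        Finset.mem_image]
      constructor
      · rintro (⟨h1, h2⟩ | rfl)
        · exact Or.inr ⟨q.1, h2, Prod.ext rfl h1.symm⟩
        · exact Or.inl rfl
      · rintro (rfl | ⟨u, hu, rfl⟩)
        · exact Or.inr rfl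
        · exact Or.inl ⟨rfl, hu⟩
    rw [hset, Finset.card_insert_of_notMem, Finset.card_image_of_injective _
      (fun a b h => (Prod.ext_iff.1 h).1), SimpleGraph.card_neighborFinset_eq_degree, hreg v]
    · simp only [Finset.mem_image]
      rintro ⟨u, hu, he⟩
      exact hi (Prod.ext_iff.1 he).2

/-- If `G` is finite and `d`-regular, then the augmented graph is `(d+1)`-regular
and its weak degeneracy is at most `wd(G) + 1`. -/
theorem augment_isRegular_and_weakDeg_le {V : Type} [Fintype V]
    (G : SimpleGraph V) (d : ℕ) (hreg : G.IsRegularOfDegree d) :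
    (augment G d).IsRegularOfDegree (d + 1) ∧ weakDeg (augment G d) ≤ weakDeg G + 1 := by
  letI : DecidableEq (V × Fin (d + 2)) := fun a b => Classical.propDecidable (a = b)
  refine ⟨augment_regular hreg, ?_⟩
  set G' := augment G d with hG'
  set k := weakDeg G with hk
  -- the weak degeneracy of G is attained
  have hne : {n : ℕ | WeaklyDegenerate G n}.Nonempty := by
    refine ⟨d, ?_⟩
    show WRem G Finset.univ (fun _ => (d : ℤ))
    apply WRem_greedy
    intro v _
    have hfil : Finset.univ.filter (G.Adj v) = G.neighborFinset v := by
      ext u; simp [SimpleGraph.mem_neighborFinset]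
    rw [hfil, SimpleGraph.card_neighborFinset_eq_degree, hreg v]
  have h0 : WeaklyDegenerate G k := Nat.sInf_mem hne
  -- each nonzero layer can be removed
  have hlayer : ∀ i : Fin (d + 2), i ≠ 0 →
      WRem G' (Finset.univ.image (fun v => (v, i))) (fun _ => (k : ℤ)) := by
    intro i hi
    refine WRem_map (φ := fun v => (v, i)) (fun a b h => (Prod.ext_iff.1 h).1) ?_ h0
      (fun _ => (k : ℤ)) (fun _ _ => rfl)
    intro u v
    constructor
    · intro h
      rw [hG', augment_adj]
      exact Or.inl ⟨rfl, hi, h⟩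
    · intro h
      rw [hG', augment_adj] at h
      rcases h with ⟨_, _, h3⟩ | ⟨_, h2, _⟩ | ⟨_, h2, _⟩
      · exact h3
      · exact absurd h2 hi
      · exact absurd h2 hi
  -- unions of nonzero layers can be removed
  have hT : ∀ T : Finset (Fin (d + 2)), (0 : Fin (d + 2)) ∉ T →
      WRem G' (Finset.univ.filter (fun p => p.2 ∈ T)) (fun _ => (k : ℤ)) := by
    intro T
    induction T using Finset.induction_on with
    | empty =>
      intro _
      have : Finset.univ.filter (fun p : V × Fin (d + 2) => p.2 ∈ (∅ : Finset (Fin (d + 2))))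
          = ∅ := by simp
      rw [this]
      exact WRem.empty _
    | @insert i T hiT ih =>
      intro h0'
      have hi : i ≠ 0 := fun h => h0' (h ▸ Finset.mem_insert_self i T)
      have h0T : (0 : Fin (d + 2)) ∉ T := fun h => h0' (Finset.mem_insert_of_mem h)
      have hset : Finset.univ.filter (fun p : V × Fin (d + 2) => p.2 ∈ insert i T)
          = (Finset.univ.image (fun v => (v, i))) ∪
            Finset.univ.filter (fun p => p.2 ∈ T) := by
        ext p
        simp only [Finset.mem_filter, Finset.mem_univ, true_and, Finset.mem_insert,
          Finset.mem_union, Finset.mem_image, Prod.ext_iff]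
        constructor
        · rintro (h | h)
          · exact Or.inl ⟨p.1, rfl, h.symm⟩
          · exact Or.inr h
        · rintro (⟨v, _, h2⟩ | h)
          · exact Or.inl h2.symm
          · exact Or.inr h
      rw [hset]
      refine WRem_union (hlayer i hi) _ ?_ ?_ (fun _ _ => Int.natCast_nonneg k) (ih h0T)
      · rw [Finset.disjoint_left]
        rintro p hp hp'
        obtain ⟨v, _, rfl⟩ := Finset.mem_image.1 hp
        exact hiT ((Finset.mem_filter.1 hp').2)
      · rintro a ha b hb hadj
        obtain ⟨v, _, rfl⟩ := Finset.mem_image.1 ha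
        have hbT : b.2 ∈ T := (Finset.mem_filter.1 hb).2
        have hb0 : b.2 ≠ 0 := fun h => h0T (h ▸ hbT)
        have hbi : b.2 ≠ i := fun h => hiT (h ▸ hbT)
        rw [hG', augment_adj] at hadj
        rcases hadj with ⟨h1, _, _⟩ | ⟨_, h2, _⟩ | ⟨_, h2, _⟩
        · exact hbi h1.symm
        · exact hi h2
        · exact hb0 h2
  -- remove zero-layer vertices one by one
  have hstep2 : ∀ A : Finset V,
      WRem G' (Finset.univ.filter (fun p : V × Fin (d + 2) => p.2 ≠ 0 ∨ p.1 ∈ A))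
        (fun p => if p.2 ≠ 0 ∧ p.1 ∉ A then (k : ℤ) else (k : ℤ) + 1) := by
    intro A
    induction A using Finset.induction_on with
    | empty =>
      have hset : Finset.univ.filter (fun p : V × Fin (d + 2) => p.2 ≠ 0 ∨ p.1 ∈ (∅ : Finset V))
          = Finset.univ.filter (fun p => p.2 ∈ Finset.univ.erase (0 : Fin (d + 2))) := by
        ext p; simp
      rw [hset]
      refine WRem_congr (hT _ (by simp)) ?_
      intro p hp
      have hp0 : p.2 ≠ 0 := (Finset.mem_erase.1 (Finset.mem_filter.1 hp).2).1
      simp [hp0]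
    | @insert v A hvA ih =>
      have hmem : ((v, 0) : V × Fin (d + 2)) ∈
          Finset.univ.filter (fun p : V × Fin (d + 2) => p.2 ≠ 0 ∨ p.1 ∈ insert v A) := by
        simp
      have hset : (Finset.univ.filter
            (fun p : V × Fin (d + 2) => p.2 ≠ 0 ∨ p.1 ∈ insert v A)).erase (v, 0)
          = Finset.univ.filter (fun p : V × Fin (d + 2) => p.2 ≠ 0 ∨ p.1 ∈ A) := by
        ext p
        simp only [Finset.mem_erase, Finset.mem_filter, Finset.mem_univ, true_and,
          Finset.mem_insert, ne_eq, Prod.ext_iff, not_and]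
        constructor
        · rintro ⟨hne, h | (h | h)⟩
          · exact Or.inl h
          · by_cases hp0 : p.2 = 0
            · exact absurd (hne h) (by simpa using hp0)
            · exact Or.inl hp0
          · exact Or.inr h
        · rintro (h | h)
          · exact ⟨fun _ h2 => absurd h2 h, Or.inl h⟩
          · refine ⟨fun h1 _ => hvA (h1 ▸ h), Or.inr (Or.inr h)⟩
      have hfun : (fun p : V × Fin (d + 2) =>
            if G'.Adj (v, 0) p then
              (if p.2 ≠ 0 ∧ p.1 ∉ insert v A then (k : ℤ) else (k : ℤ) + 1) - 1
            else (if p.2 ≠ 0 ∧ p.1 ∉ insert v A then (k : ℤ) else (k : ℤ) + 1))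
          = fun p => if p.2 ≠ 0 ∧ p.1 ∉ A then (k : ℤ) else (k : ℤ) + 1 := by
        funext p
        rw [hG', augment_adj_zero]
        by_cases hadj : p.1 = v ∧ p.2 ≠ 0
        · rw [if_pos hadj]
          have h1 : ¬(p.2 ≠ 0 ∧ p.1 ∉ insert v A) := by
            rintro ⟨_, h⟩; exact h (hadj.1 ▸ Finset.mem_insert_self v A)
          have h2 : p.2 ≠ 0 ∧ p.1 ∉ A := ⟨hadj.2, hadj.1 ▸ hvA⟩
          rw [if_neg h1, if_pos h2]; ring
        · rw [if_neg hadj]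
          congr 1
          simp only [eq_iff_iff, Finset.mem_insert, not_or]
          constructor
          · rintro ⟨h1, _, h3⟩; exact ⟨h1, h3⟩
          · rintro ⟨h1, h3⟩
            refine ⟨h1, fun he => hadj ⟨he, h1⟩, h3⟩
      refine WRem.del (v, 0) hmem ?_ ?_
      · intro p hp
        have : (if G'.Adj (v, 0) p then
              (if p.2 ≠ 0 ∧ p.1 ∉ insert v A then (k : ℤ) else (k : ℤ) + 1) - 1
            else (if p.2 ≠ 0 ∧ p.1 ∉ insert v A then (k : ℤ) else (k : ℤ) + 1))
            = (if p.2 ≠ 0 ∧ p.1 ∉ A then (k : ℤ) else (k : ℤ) + 1) :=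
          congrFun hfun p
        rw [this]
        split <;> positivity
      · rw [hset, hfun]
        exact ih
  -- conclude
  have hfinal : WeaklyDegenerate G' (k + 1) := by
    have h := hstep2 Finset.univ
    have hset : Finset.univ.filter
        (fun p : V × Fin (d + 2) => p.2 ≠ 0 ∨ p.1 ∈ (Finset.univ : Finset V))
        = Finset.univ := by simp
    rw [hset] at h
    refine WRem_congr h ?_
    intro p _
    push_cast
    simp
  exact Nat.sInf_le hfinal

end WeakDegeneracy
end

section
/- Let G be a finite d-regular simple graph with n ≥ 2 vertices. Then wd(G) ≥ d − √(2n). -/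
open scoped Classical

namespace WeakDegeneracy

variable {V : Type} [Fintype V]

/-- cardinality of neighborhood restricted to `S.erase u` -/
lemma card_inter_erase (G : SimpleGraph V) (u v : V) {S : Finset V} (hu : u ∈ S) :
    ((G.neighborFinset v ∩ S.erase u).card : ℤ) =
      if G.Adj u v then ((G.neighborFinset v ∩ S).card : ℤ) - 1
      else ((G.neighborFinset v ∩ S).card : ℤ) := by
  have hset : G.neighborFinset v ∩ S.erase u = (G.neighborFinset v ∩ S).erase u := by
    ext x
    simp only [Finset.mem_inter, Finset.mem_erase]
    tauto
  by_cases h : G.Adj u v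
  · rw [if_pos h, hset, Finset.cast_card_erase_of_mem]
    exact Finset.mem_inter.2 ⟨(SimpleGraph.mem_neighborFinset G v u).2 h.symm, hu⟩
  · rw [if_neg h, hset, Finset.erase_eq_of_notMem]
    intro hx
    exact h ((SimpleGraph.mem_neighborFinset G v u).1 (Finset.mem_inter.1 hx).1).symm

lemma card_nb_le (G : SimpleGraph V) (u : V) (S : Finset V) :
    ((G.neighborFinset u ∩ S).card : ℤ) ≤ ((S.erase u).card : ℤ) := by
  have : G.neighborFinset u ∩ S ⊆ S.erase u := by
    intro x hx
    rcases Finset.mem_inter.1 hx with ⟨h1, h2⟩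
    exact Finset.mem_erase.2 ⟨((SimpleGraph.mem_neighborFinset G u x).1 h1).ne', h2⟩
  exact_mod_cast Finset.card_le_card this

lemma key (G : SimpleGraph V) {S : Finset V} {f : V → ℤ} (h : WRem G S f) :
    (∀ v ∈ S, 0 ≤ f v) → ∀ s : ℤ,
    ∑ i ∈ Finset.range S.card, max 0 (s - (i : ℤ)) ≤
      (S.card : ℤ) + ∑ v ∈ S, max 0 (s - (((G.neighborFinset v ∩ S).card : ℤ) - f v)) := by
  induction h with
  | empty f => intro _ s; simp
  | @del T g u hu hleg h ih =>
    intro hf s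
    have hcard : T.card = (T.erase u).card + 1 := (Finset.card_erase_add_one hu).symm
    have hsum : ∑ v ∈ T.erase u, max 0 (s -
          (((G.neighborFinset v ∩ T.erase u).card : ℤ) - (if G.Adj u v then g v - 1 else g v)))
        = ∑ v ∈ T.erase u, max 0 (s - (((G.neighborFinset v ∩ T).card : ℤ) - g v)) := by
      refine Finset.sum_congr rfl fun v hv => ?_
      rw [card_inter_erase G u v hu]
      by_cases h' : G.Adj u v <;> simp [h']
    have ih' := ih hleg s
    rw [hsum] at ih'
    have hstep : max 0 (s - ((T.erase u).card : ℤ)) ≤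
        max 0 (s - (((G.neighborFinset u ∩ T).card : ℤ) - g u)) := by
      refine max_le_max le_rfl ?_
      have h1 := card_nb_le G u T
      have h2 := hf u hu
      linarith
    have hsplit : ∑ v ∈ T.erase u, max 0 (s - (((G.neighborFinset v ∩ T).card : ℤ) - g v))
        + max 0 (s - (((G.neighborFinset u ∩ T).card : ℤ) - g u))
        = ∑ v ∈ T, max 0 (s - (((G.neighborFinset v ∩ T).card : ℤ) - g v)) :=
      Finset.sum_erase_add T _ hu
    rw [hcard, Finset.sum_range_succ]
    push_cast
    push_cast at ih'
    linarith
  | @delSave T g u w hu hw hadj hgt hleg h ih =>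
    intro hf s
    have hwu : w ∈ T.erase u := Finset.mem_erase.2 ⟨hadj.ne', hw⟩
    have hcard : T.card = (T.erase u).card + 1 := (Finset.card_erase_add_one hu).symm
    have hsum : ∑ v ∈ T.erase u, max 0 (s -
          (((G.neighborFinset v ∩ T.erase u).card : ℤ) -
            (if G.Adj u v ∧ v ≠ w then g v - 1 else g v)))
        ≤ ∑ v ∈ T.erase u, (max 0 (s - (((G.neighborFinset v ∩ T).card : ℤ) - g v))
            + if v = w then 1 else 0) := by
      refine Finset.sum_le_sum fun v hv => ?_
      rw [card_inter_erase G u v hu]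
      by_cases hvw : v = w
      · subst hvw
        rw [if_pos hadj, if_neg (by simp), if_pos rfl]
        have h1 : s - (((G.neighborFinset v ∩ T).card : ℤ) - 1 - g v)
            = (s - (((G.neighborFinset v ∩ T).card : ℤ) - g v)) + 1 := by ring
        rw [h1]
        rcases le_or_gt (s - (((G.neighborFinset v ∩ T).card : ℤ) - g v) + 1) 0 with h2 | h2
        · simp [max_eq_left h2]
          positivity
        · rw [max_eq_right h2.le]
          have := le_max_right 0 (s - (((G.neighborFinset v ∩ T).card : ℤ) - g v))
          linarith
      · rw [if_neg hvw]
        by_cases h' : G.Adj u v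
        · rw [if_pos h', if_pos ⟨h', hvw⟩]
          apply le_of_eq
          congr 1
          ring
        · rw [if_neg h', if_neg (by tauto)]
          simp
    have hone : ∑ v ∈ T.erase u, (if v = w then (1:ℤ) else 0) = 1 := by
      rw [Finset.sum_ite_eq' (T.erase u) w (fun _ => (1:ℤ))]
      simp [hwu]
    rw [Finset.sum_add_distrib, hone] at hsum
    have ih' := ih hleg s
    have hstep : max 0 (s - ((T.erase u).card : ℤ)) ≤
        max 0 (s - (((G.neighborFinset u ∩ T).card : ℤ) - g u)) := by
      refine max_le_max le_rfl ?_
      have h1 := card_nb_le G u T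
      have h2 := hf u hu
      linarith
    have hsplit : ∑ v ∈ T.erase u, max 0 (s - (((G.neighborFinset v ∩ T).card : ℤ) - g v))
        + max 0 (s - (((G.neighborFinset u ∩ T).card : ℤ) - g u))
        = ∑ v ∈ T, max 0 (s - (((G.neighborFinset v ∩ T).card : ℤ) - g v)) :=
      Finset.sum_erase_add T _ hu
    rw [hcard, Finset.sum_range_succ]
    push_cast
    push_cast at ih'
    linarith

lemma wrem_of_deg_le (G : SimpleGraph V) (S : Finset V) :
    ∀ (f : V → ℤ), (∀ v ∈ S, ((G.neighborFinset v ∩ S).card : ℤ) ≤ f v) → WRem G S f := by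
  induction S using Finset.strongInduction with
  | _ S ih =>
    intro f hf
    rcases S.eq_empty_or_nonempty with rfl | ⟨u, hu⟩
    · exact WRem.empty f
    · have hkey : ∀ v ∈ S.erase u, ((G.neighborFinset v ∩ S.erase u).card : ℤ) ≤
          (if G.Adj u v then f v - 1 else f v) := by
        intro v hv
        rw [card_inter_erase G u v hu]
        by_cases h' : G.Adj u v <;> simp [h']
        · linarith [hf v (Finset.mem_of_mem_erase hv)]
        · exact hf v (Finset.mem_of_mem_erase hv)
      refine WRem.del u hu (fun v hv => le_trans (by positivity) (hkey v hv)) ?_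
      exact ih (S.erase u) (Finset.erase_ssubset hu) _ hkey

/-- Let `G` be a finite `d`-regular simple graph with `n ≥ 2` vertices.  Then
`wd(G) ≥ d - √(2n)`. -/
theorem weakDeg_ge_sub_sqrt {V : Type} [Fintype V] (G : SimpleGraph V) (d : ℕ)
    (hreg : G.IsRegularOfDegree d) (hn : 2 ≤ Fintype.card V) :
    (d : ℝ) - Real.sqrt (2 * Fintype.card V) ≤ (weakDeg G : ℝ) := by
  set n := Fintype.card V with hn_def
  have hdcard : ∀ v : V, ((G.neighborFinset v).card : ℤ) = (d : ℤ) := by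
    intro v
    have := hreg v
    rw [SimpleGraph.degree] at this
    exact_mod_cast this
  have hd : WeaklyDegenerate G d := by
    apply wrem_of_deg_le
    intro v _
    rw [Finset.inter_univ, hdcard v]
  have hmem : d ∈ {d' : ℕ | WeaklyDegenerate G d'} := hd
  have hk : WeaklyDegenerate G (weakDeg G) := Nat.sInf_mem ⟨d, hmem⟩
  set k := weakDeg G with hk_def
  have hsq : 0 ≤ Real.sqrt (2 * (n : ℝ)) := Real.sqrt_nonneg _
  rcases le_or_gt (d : ℤ) (k : ℤ) with h | h
  · have : (d : ℝ) ≤ (k : ℝ) := by exact_mod_cast h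
    linarith
  · set s : ℤ := (d : ℤ) - (k : ℤ) with hs_def
    have hs1 : 1 ≤ s := by omega
    obtain ⟨v0⟩ : Nonempty V := Fintype.card_pos_iff.1 (by omega)
    have hdn : d < n := by
      have := G.degree_lt_card_verts v0
      rw [hreg v0] at this
      exact this
    have H := key G hk (fun v _ => by positivity) s
    rw [Finset.card_univ] at H
    have hbud : ∑ v ∈ (Finset.univ : Finset V),
        max 0 (s - (((G.neighborFinset v ∩ Finset.univ).card : ℤ) - (k : ℤ))) = 0 := by
      apply Finset.sum_eq_zero
      intro v _
      rw [Finset.inter_univ, hdcard v]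
      simp [hs_def]
    rw [hbud, add_zero] at H
    set t := s.toNat with ht_def
    have hts : (t : ℤ) = s := Int.toNat_of_nonneg (by omega)
    have ht1 : 1 ≤ t := by omega
    have htn : t ≤ n := by omega
    have hlow : ∑ i ∈ Finset.range t, (s - (i : ℤ)) ≤
        ∑ i ∈ Finset.range n, max 0 (s - (i : ℤ)) := by
      calc ∑ i ∈ Finset.range t, (s - (i : ℤ))
          ≤ ∑ i ∈ Finset.range t, max 0 (s - (i : ℤ)) :=
            Finset.sum_le_sum fun i _ => le_max_right _ _
        _ ≤ ∑ i ∈ Finset.range n, max 0 (s - (i : ℤ)) :=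
            Finset.sum_le_sum_of_subset_of_nonneg (Finset.range_subset_range.2 htn)
              (fun i _ _ => le_max_left _ _)
    have hgauss : (∑ i ∈ Finset.range t, (i : ℤ)) * 2 = (t : ℤ) * ((t : ℤ) - 1) := by
      have h2 := Finset.sum_range_id_mul_two t
      have : ((∑ i ∈ Finset.range t, i : ℕ) : ℤ) * 2 = ((t * (t - 1) : ℕ) : ℤ) := by
        exact_mod_cast congrArg (Nat.cast : ℕ → ℤ) h2
      push_cast [Nat.cast_sub ht1] at this
      push_cast
      linarith
    have hsum_eval : ∑ i ∈ Finset.range t, (s - (i : ℤ)) =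
        (t : ℤ) * s - ∑ i ∈ Finset.range t, (i : ℤ) := by
      rw [Finset.sum_sub_distrib, Finset.sum_const, Finset.card_range]
      simp [mul_comm]
    have hss : s * s ≤ 2 * (n : ℤ) := by nlinarith [H, hlow, hgauss, hsum_eval, hts, hs1]
    have hsR : (s : ℝ) ≤ Real.sqrt (2 * (n : ℝ)) := by
      have h2 : ((s : ℝ)) ^ 2 ≤ 2 * (n : ℝ) := by
        have : (s : ℤ) ^ 2 ≤ 2 * (n : ℤ) := by nlinarith [hss]
        exact_mod_cast this
      calc (s : ℝ) = Real.sqrt ((s : ℝ) ^ 2) := (Real.sqrt_sq (by exact_mod_cast (by omega : (0:ℤ) ≤ s) : (0:ℝ) ≤ (s:ℝ))).symm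
        _ ≤ Real.sqrt (2 * (n : ℝ)) := Real.sqrt_le_sqrt h2
    have hseq : (s : ℝ) = (d : ℝ) - (k : ℝ) := by push_cast [hs_def]; ring
    linarith


end WeakDegeneracy
end
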